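/- Let (𝒴, ℬ(𝒴)) be a measurable space, (𝒵, P_Z) a probability space, and Θ ⊆ ℝ^d. For each θ ∈ Θ let z ↦ p_θ(·|z) be a probability kernel from 𝒵 to 𝒴 and set p̄_θ := ∫ p_θ(·|z) dP_Z(z). Fix θ* ∈ Θ and let (θ̂_n) be Θ-valued random variables. Assume: (A1) there exists a probability measure p* on 𝒴 with p_{θ*}(·|z) = p* for P_Z-almost every z; (A2) θ̂_n → θ* in probability; (A3) for every ε > 0 there exists δ > 0 such that ‖θ − θ*‖ < δ implies sup_{z ∈ 𝒵} TV(p_θ(·|z), p_{θ*}(·|z)) < ε; (A4) there exist C ≥ 1 and a neighborhood U of θ* such that for all θ ∈ U and P_Z-almost every z, p_θ(·|z) ≪ p̄_θ with dp_θ(·|z)/dp̄_θ ≤ C p̄_θ-almost everywhere. Then I_{θ̂_n} := ∫ KL(p_{θ̂_n}(·|z) ‖ p̄_{θ̂_n}) dP_Z(z) → 0 in probability as n → ∞. -/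

import Mathlib

open MeasureTheory Filter

/-- Kullback–Leibler divergence `KL(p‖q) := ∫ (dp/dq) log(dp/dq) dq`. -/
noncomputable def KL {Y : Type*} [MeasurableSpace Y] (p q : Measure Y) : ℝ :=
  ∫ y, (p.rnDeriv q y).toReal * Real.log (p.rnDeriv q y).toReal ∂q

/-- Total variation distance `TV(p, q) := sup_{A measurable} |p(A) - q(A)|`. -/
noncomputable def TV {Y : Type*} [MeasurableSpace Y] (p q : Measure Y) : ℝ :=
  ⨆ A : {A : Set Y // MeasurableSet A}, |(p A).toReal - (q A).toReal|

/-!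
Write `h = dp/dq`. Then `KL(p‖q) = ∫ (h log h + 1 - h) dq`, and
`h log h + 1 - h ≤ C |h - 1|` for `0 ≤ h ≤ C`, `C ≥ 1`; since `∫ |h - 1| dq ≤ 2 TV(p, q)`,
a likelihood ratio bounded by `C` gives `KL(p‖q) ≤ 2C TV(p, q)`. Near `θ*` every `p_θ(·|z)`
is `ε`-close in total variation to `p*`, hence so is the mixture `p̄_θ`, and `I_θ ≤ 4Cε`.
Thus `I_θ → 0` as `θ → θ*` within `Θ`, and consistency of `θ̂_n` transfers this to
`I_{θ̂_n}`.
-/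

open InformationTheory

lemma klFun_le_mul_abs_sub_one {x C : ℝ} (hx : 0 ≤ x) (hxC : x ≤ C) (hC : 1 ≤ C) :
    klFun x ≤ C * |x - 1| := by
  rw [klFun_apply]
  rcases le_or_gt x 1 with hx1 | hx1
  · have : x * Real.log x ≤ 0 := mul_nonpos_of_nonneg_of_nonpos hx (Real.log_nonpos hx hx1)
    rw [abs_of_nonpos (by linarith)]
    nlinarith
  · have : x * Real.log x ≤ x * (x - 1) :=
      mul_le_mul_of_nonneg_left (Real.log_le_sub_one_of_pos (by linarith)) hx
    rw [abs_of_pos (by linarith)]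
    nlinarith

section TotalVariation

variable {Y : Type*} [MeasurableSpace Y] (p q : Measure Y) [IsProbabilityMeasure p]
  [IsProbabilityMeasure q]

lemma abs_measureReal_sub_le_one (A : Set Y) : |p.real A - q.real A| ≤ 1 :=
  abs_sub_le_of_nonneg_of_le measureReal_nonneg measureReal_le_one measureReal_nonneg
    measureReal_le_one

lemma TV_le_one : TV p q ≤ 1 :=
  Real.iSup_le (fun A => abs_measureReal_sub_le_one p q A) zero_le_one

lemma abs_measureReal_sub_le_TV {A : Set Y} (hA : MeasurableSet A) :
    |p.real A - q.real A| ≤ TV p q :=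
  le_ciSup (f := fun A : {A : Set Y // MeasurableSet A} => |p.real A - q.real A|)
    ⟨1, by rintro _ ⟨B, rfl⟩; exact abs_measureReal_sub_le_one p q B⟩ ⟨A, hA⟩

end TotalVariation

lemma TV_le_iSup_TV {Y Z : Type*} [MeasurableSpace Y] (κ κ' : Z → Measure Y)
    [∀ z, IsProbabilityMeasure (κ z)] [∀ z, IsProbabilityMeasure (κ' z)] (z : Z) :
    TV (κ z) (κ' z) ≤ ⨆ z, TV (κ z) (κ' z) :=
  le_ciSup (f := fun z => TV (κ z) (κ' z))
    ⟨1, by rintro _ ⟨z', rfl⟩; exact TV_le_one (κ z') (κ' z')⟩ z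

section KL

variable {Y : Type*} [MeasurableSpace Y] {p q : Measure Y}

lemma integral_abs_toReal_rnDeriv_sub_one_le [IsFiniteMeasure p] [IsFiniteMeasure q]
    (hpq : p ≪ q) {η : ℝ} (hη : ∀ A, MeasurableSet A → |p.real A - q.real A| ≤ η) :
    ∫ y, |(p.rnDeriv q y).toReal - 1| ∂q ≤ 2 * η := by
  set h : Y → ℝ := fun y => (p.rnDeriv q y).toReal
  have hh : Integrable h q := Measure.integrable_toReal_rnDeriv
  have hsub : ∀ A, ∫ y in A, (h y - 1) ∂q = p.real A - q.real A := fun A => by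
    rw [integral_sub hh.integrableOn (integrable_const 1).integrableOn,
      Measure.setIntegral_toReal_rnDeriv hpq, setIntegral_const, smul_eq_mul, mul_one]
  set A := {y | 1 < h y}
  have hA : MeasurableSet A :=
    measurableSet_lt measurable_const (Measure.measurable_rnDeriv p q).ennreal_toReal
  have on_A : ∫ y in A, |h y - 1| ∂q = p.real A - q.real A := by
    rw [← hsub]
    exact setIntegral_congr_fun hA fun y hy => abs_of_pos (sub_pos.mpr hy)
  have on_compl : ∫ y in Aᶜ, |h y - 1| ∂q = -(p.real Aᶜ - q.real Aᶜ) := by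
    rw [← hsub, ← integral_neg]
    exact setIntegral_congr_fun hA.compl fun y hy => abs_of_nonpos (sub_nonpos.mpr (not_lt.mp hy))
  have habs : Integrable (fun y => |h y - 1|) q := (hh.sub (integrable_const 1)).abs
  rw [← integral_add_compl hA habs, on_A, on_compl]
  linarith [(abs_le.mp (hη A hA)).2, (abs_le.mp (hη Aᶜ hA.compl)).1]

/-- `x log x` and `klFun x` differ by the integrable `1 - x`, so when either integrand is not
integrable both sides are the junk value `0`. -/
lemma KL_eq_integral_klFun [IsProbabilityMeasure p] [IsProbabilityMeasure q] (hpq : p ≪ q) :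
    KL p q = ∫ y, klFun (p.rnDeriv q y).toReal ∂q := by
  have hone_sub : Integrable (fun y => 1 - (p.rnDeriv q y).toReal) q :=
    (integrable_const 1).sub Measure.integrable_toReal_rnDeriv
  simp only [klFun_apply, add_sub_assoc]
  by_cases hlog :
      Integrable (fun y => (p.rnDeriv q y).toReal * Real.log (p.rnDeriv q y).toReal) q
  · rw [integral_add hlog hone_sub,
      integral_sub (integrable_const 1) Measure.integrable_toReal_rnDeriv,
      Measure.integral_toReal_rnDeriv hpq]
    simp [KL]
  · rw [KL, integral_undef hlog,
      integral_undef ((integrable_add_iff_integrable_left' hone_sub).not.mpr hlog)]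

lemma KL_nonneg [IsProbabilityMeasure p] [IsProbabilityMeasure q] (hpq : p ≪ q) :
    0 ≤ KL p q := by
  rw [KL_eq_integral_klFun hpq]
  exact integral_nonneg fun y => klFun_nonneg ENNReal.toReal_nonneg

lemma KL_le_of_rnDeriv_le [IsProbabilityMeasure p] [IsProbabilityMeasure q] (hpq : p ≪ q)
    {C η : ℝ} (hC : 1 ≤ C) (hratio : ∀ᵐ y ∂q, p.rnDeriv q y ≤ ENNReal.ofReal C)
    (hη : ∀ A, MeasurableSet A → |p.real A - q.real A| ≤ η) :
    KL p q ≤ 2 * C * η := by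
  have hh : Integrable (fun y => (p.rnDeriv q y).toReal) q := Measure.integrable_toReal_rnDeriv
  rw [KL_eq_integral_klFun hpq]
  calc ∫ y, klFun (p.rnDeriv q y).toReal ∂q ≤ ∫ y, C * |(p.rnDeriv q y).toReal - 1| ∂q := by
        refine integral_mono_of_nonneg (ae_of_all _ fun y => klFun_nonneg ENNReal.toReal_nonneg)
          ((hh.sub (integrable_const 1)).abs.const_mul C) ?_
        filter_upwards [hratio] with y hy
        exact klFun_le_mul_abs_sub_one ENNReal.toReal_nonneg
          (ENNReal.toReal_le_of_le_ofReal (by linarith) hy) hC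
    _ = C * ∫ y, |(p.rnDeriv q y).toReal - 1| ∂q := integral_const_mul C _
    _ ≤ C * (2 * η) := by
        gcongr
        exact integral_abs_toReal_rnDeriv_sub_one_le hpq hη
    _ = 2 * C * η := by ring

end KL

section Mixture

variable {Y Z : Type*} [MeasurableSpace Y] [MeasurableSpace Z] {PZ : Measure Z}
  {κ : Z → Measure Y} [∀ z, IsProbabilityMeasure (κ z)]

lemma measureReal_bind (hκ : Measurable κ) {A : Set Y} (hA : MeasurableSet A) :
    (PZ.bind κ).real A = ∫ z, (κ z).real A ∂PZ := by
  rw [measureReal_def, Measure.bind_apply hA hκ.aemeasurable,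
    ← integral_toReal (f := fun z => κ z A) ((Measure.measurable_coe hA).comp hκ).aemeasurable
      (ae_of_all _ fun z => measure_lt_top _ _)]
  rfl

lemma abs_measureReal_bind_sub_le [IsProbabilityMeasure PZ] (hκ : Measurable κ) (r : Measure Y)
    {A : Set Y} (hA : MeasurableSet A) {η : ℝ}
    (hclose : ∀ᵐ z ∂PZ, |(κ z).real A - r.real A| ≤ η) :
    |(PZ.bind κ).real A - r.real A| ≤ η := by
  have hint : Integrable (fun z => (κ z).real A) PZ :=
    .of_bound ((Measure.measurable_coe hA).comp hκ).ennreal_toReal.aestronglyMeasurable 1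
      (ae_of_all _ fun z => by
        rw [Real.norm_of_nonneg measureReal_nonneg]; exact measureReal_le_one)
  calc |(PZ.bind κ).real A - r.real A| = ‖∫ z, ((κ z).real A - r.real A) ∂PZ‖ := by
        rw [integral_sub hint (integrable_const _), measureReal_bind hκ hA]
        simp
    _ ≤ η := by
        simpa using
          norm_integral_le_of_norm_le_const (f := fun z => (κ z).real A - r.real A) hclose

end Mixture

noncomputable def mutualInfo {Y Z : Type*} [MeasurableSpace Y] [MeasurableSpace Z]
    (PZ : Measure Z) (κ : Z → Measure Y) : ℝ :=
  ∫ z, KL (κ z) (PZ.bind κ) ∂PZ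

lemma abs_mutualInfo_le {Y Z : Type*} [MeasurableSpace Y] [MeasurableSpace Z] {PZ : Measure Z}
    [IsProbabilityMeasure PZ] {κ : Z → Measure Y} [∀ z, IsProbabilityMeasure (κ z)]
    (hκ : Measurable κ) (r : Measure Y) {C η : ℝ} (hC : 1 ≤ C)
    (hclose : ∀ᵐ z ∂PZ, ∀ A, MeasurableSet A → |(κ z).real A - r.real A| ≤ η)
    (hratio : ∀ᵐ z ∂PZ, κ z ≪ PZ.bind κ ∧
      ∀ᵐ y ∂PZ.bind κ, (κ z).rnDeriv (PZ.bind κ) y ≤ ENNReal.ofReal C) :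
    |mutualInfo PZ κ| ≤ 4 * C * η := by
  have := isProbabilityMeasure_bind hκ.aemeasurable (ae_of_all PZ inferInstance)
  have hmix : ∀ A, MeasurableSet A → |(PZ.bind κ).real A - r.real A| ≤ η := fun A hA =>
    abs_measureReal_bind_sub_le hκ r hA (hclose.mono fun z hz => hz A hA)
  have hKL : ∀ᵐ z ∂PZ, ‖KL (κ z) (PZ.bind κ)‖ ≤ 4 * C * η := by
    filter_upwards [hclose, hratio] with z hz ⟨hac, hbd⟩
    rw [Real.norm_of_nonneg (KL_nonneg hac)]
    refine (KL_le_of_rnDeriv_le hac hC hbd (η := 2 * η) fun A hA => ?_).trans_eq (by ring)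
    calc |(κ z).real A - (PZ.bind κ).real A|
        ≤ |(κ z).real A - r.real A| + |r.real A - (PZ.bind κ).real A| := abs_sub_le _ _ _
      _ ≤ η + η := add_le_add (hz A hA) (by rw [abs_sub_comm]; exact hmix A hA)
      _ = 2 * η := by ring
  simpa [mutualInfo] using norm_integral_le_of_norm_le_const hKL

lemma tendsto_measure_lt_abs_comp {Ω E ι : Type*} [MeasurableSpace Ω]
    [SeminormedAddCommGroup E] {μ : Measure Ω} {l : Filter ι} {s : Set E} {x : E}
    {X : ι → Ω → E} (hXs : ∀ i ω, X i ω ∈ s)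
    (hX : ∀ ε > (0 : ℝ), Tendsto (fun i => μ {ω | ε < ‖X i ω - x‖}) l (nhds 0))
    {g : E → ℝ} (hg : Tendsto g (nhdsWithin x s) (nhds 0)) :
    ∀ ε > (0 : ℝ), Tendsto (fun i => μ {ω | ε < |g (X i ω)|}) l (nhds 0) := by
  intro ε hε
  obtain ⟨δ, hδ, hgδ⟩ := Metric.tendsto_nhdsWithin_nhds.mp hg ε hε
  refine tendsto_of_tendsto_of_tendsto_of_le_of_le tendsto_const_nhds (hX (δ / 2) (half_pos hδ))
    (fun i => zero_le) fun i => measure_mono fun ω hω => ?_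
  by_contra hnear
  have hclose : dist (X i ω) x < δ := by
    rw [dist_eq_norm]; exact (not_lt.mp hnear).trans_lt (half_lt_self hδ)
  have hsmall := hgδ (hXs i ω) hclose
  rw [Real.dist_0_eq_abs] at hsmall
  exact lt_asymm hω hsmall

theorem stmt7_general {Y Z Ω : Type*} [MeasurableSpace Y] [MeasurableSpace Z] [MeasurableSpace Ω]
    {d : ℕ} (Θ : Set (EuclideanSpace ℝ (Fin d)))
    (PZ : Measure Z) [IsProbabilityMeasure PZ]
    (μ : Measure Ω)
    (p : EuclideanSpace ℝ (Fin d) → Z → Measure Y)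
    (hpmeas : ∀ θ, Measurable (p θ))
    (hpprob : ∀ θ z, IsProbabilityMeasure (p θ z))
    (θs : EuclideanSpace ℝ (Fin d))
    (θhat : ℕ → Ω → EuclideanSpace ℝ (Fin d))
    (hθhatΘ : ∀ n ω, θhat n ω ∈ Θ)
    (pstar : Measure Y)
    -- (A1) well-specification
    (hA1 : ∀ᵐ z ∂PZ, p θs z = pstar)
    -- (A2) consistency: θ̂_n → θ* in probability
    (hA2 : ∀ ε > (0 : ℝ), Tendsto (fun n => μ {ω | ε < ‖θhat n ω - θs‖}) atTop (nhds 0))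
    -- (A3) uniform continuity in total variation at θ*
    (hA3 : ∀ ε > (0 : ℝ), ∃ δ > (0 : ℝ), ∀ θ ∈ Θ, ‖θ - θs‖ < δ →
        (⨆ z, TV (p θ z) (p θs z)) < ε)
    -- (A4) bounded likelihood ratio in a neighborhood of θ*
    (hA4 : ∃ C ≥ (1 : ℝ), ∃ U ∈ nhds θs, ∀ θ ∈ U, θ ∈ Θ →
        ∀ᵐ z ∂PZ, p θ z ≪ PZ.bind (p θ) ∧
          ∀ᵐ y ∂(PZ.bind (p θ)),
            (p θ z).rnDeriv (PZ.bind (p θ)) y ≤ ENNReal.ofReal C) :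
    ∀ ε > (0 : ℝ), Tendsto
      (fun n => μ {ω | ε < |∫ z, KL (p (θhat n ω) z) (PZ.bind (p (θhat n ω))) ∂PZ|})
      atTop (nhds 0) := by
  refine tendsto_measure_lt_abs_comp hθhatΘ hA2 (g := fun θ => mutualInfo PZ (p θ)) ?_
  obtain ⟨C, hC, U, hU, hratio⟩ := hA4
  obtain ⟨r, hr, hballU⟩ := Metric.mem_nhds_iff.mp hU
  refine Metric.tendsto_nhdsWithin_nhds.mpr fun ε hε => ?_
  obtain ⟨δ, hδ, hTV⟩ := hA3 (ε / (8 * C)) (by positivity)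
  refine ⟨min δ r, lt_min hδ hr, fun θ hθΘ hθ => ?_⟩
  rw [dist_eq_norm] at hθ
  have hclose : ∀ᵐ z ∂PZ, ∀ A, MeasurableSet A →
      |(p θ z).real A - pstar.real A| ≤ ε / (8 * C) := by
    filter_upwards [hA1] with z hz A hA
    rw [← hz]
    exact (abs_measureReal_sub_le_TV _ _ hA).trans
      ((TV_le_iSup_TV _ _ z).trans (hTV θ hθΘ (hθ.trans_le (min_le_left _ _))).le)
  rw [Real.dist_0_eq_abs]
  calc |mutualInfo PZ (p θ)| ≤ 4 * C * (ε / (8 * C)) :=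
        abs_mutualInfo_le (hpmeas θ) pstar hC hclose
          (hratio θ (hballU (mem_ball_iff_norm.mpr (hθ.trans_le (min_le_right _ _)))) hθΘ)
    _ < ε := by field_simp; linarith

/-- Mutual Information Collapse: under well-specification (A1),
consistency of `θ̂_n` in probability (A2), uniform total-variation continuity at
`θ*` (A3), and a uniform likelihood-ratio bound near `θ*` (A4), the epistemic
mutual information `I_{θ̂_n} = ∫ KL(p_{θ̂_n}(·|z) ‖ p̄_{θ̂_n}) dP_Z(z)` converges
to `0` in probability. Mixtures `p̄_θ` are realized as `PZ.bind (p θ)`. -/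
theorem stmt7 {Y Z Ω : Type*} [MeasurableSpace Y] [MeasurableSpace Z] [MeasurableSpace Ω]
    {d : ℕ} (Θ : Set (EuclideanSpace ℝ (Fin d)))
    (PZ : Measure Z) [IsProbabilityMeasure PZ]
    (μ : Measure Ω) [IsProbabilityMeasure μ]
    (p : EuclideanSpace ℝ (Fin d) → Z → Measure Y)
    (hpmeas : ∀ θ, Measurable (p θ))
    (hpprob : ∀ θ z, IsProbabilityMeasure (p θ z))
    (θs : EuclideanSpace ℝ (Fin d)) (hθsΘ : θs ∈ Θ)
    (θhat : ℕ → Ω → EuclideanSpace ℝ (Fin d))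
    (hθhatmeas : ∀ n, Measurable (θhat n))
    (hθhatΘ : ∀ n ω, θhat n ω ∈ Θ)
    (pstar : Measure Y) (hpstarprob : IsProbabilityMeasure pstar)
    -- (A1) well-specification
    (hA1 : ∀ᵐ z ∂PZ, p θs z = pstar)
    -- (A2) consistency: θ̂_n → θ* in probability
    (hA2 : ∀ ε > (0 : ℝ), Tendsto (fun n => μ {ω | ε < ‖θhat n ω - θs‖}) atTop (nhds 0))
    -- (A3) uniform continuity in total variation at θ*
    (hA3 : ∀ ε > (0 : ℝ), ∃ δ > (0 : ℝ), ∀ θ ∈ Θ, ‖θ - θs‖ < δ →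
        (⨆ z, TV (p θ z) (p θs z)) < ε)
    -- (A4) bounded likelihood ratio in a neighborhood of θ*
    (hA4 : ∃ C ≥ (1 : ℝ), ∃ U ∈ nhds θs, ∀ θ ∈ U, θ ∈ Θ →
        ∀ᵐ z ∂PZ, p θ z ≪ PZ.bind (p θ) ∧
          ∀ᵐ y ∂(PZ.bind (p θ)),
            (p θ z).rnDeriv (PZ.bind (p θ)) y ≤ ENNReal.ofReal C) :
    ∀ ε > (0 : ℝ), Tendsto
      (fun n => μ {ω | ε < |∫ z, KL (p (θhat n ω) z) (PZ.bind (p (θhat n ω))) ∂PZ|})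
      atTop (nhds 0) :=
  stmt7_general Θ PZ μ p hpmeas hpprob θs θhat hθhatΘ pstar hA1 hA2 hA3 hA4
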